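/- The ◁-maximal stable partition-relation pair over G is exactly the one induced by partial bisimilarity: the pair (P, ≤) with P = S/≃_B and [p] ≤ [q] iff p ≤_B q is stable, and every stable partition-relation pair (P', ≤') over G satisfies (P', ≤') ◁ (P, ≤). -/

import Mathlib

variable {S A : Type*}

/-- R is a partial bisimulation w.r.t. the bisimulation action set B. -/
def IsPB (tm : S → Prop) (tr : S → A → S → Prop) (B : Set A)
    (R : S → S → Prop) : Prop :=
  ∀ p q, R p q →
    (tm p → tm q) ∧
    (∀ a p', tr p a p' → ∃ q', tr q a q' ∧ R p' q') ∧
    (∀ b q', b ∈ B → tr q b q' → ∃ p', tr p b p' ∧ R p' q')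

/-- The partial bisimilarity preorder ≤_B. -/
def PbLe (tm : S → Prop) (tr : S → A → S → Prop) (B : Set A) (p q : S) : Prop :=
  ∃ R, IsPB tm tr B R ∧ R p q

/-- R is a simulation. -/
def IsSim (tm : S → Prop) (tr : S → A → S → Prop) (R : S → S → Prop) : Prop :=
  ∀ p q, R p q →
    (tm p → tm q) ∧
    (∀ a p', tr p a p' → ∃ q', tr q a q' ∧ R p' q')

/-- Strong similarity preorder. -/
def SimLe (tm : S → Prop) (tr : S → A → S → Prop) (p q : S) : Prop :=
  ∃ R, IsSim tm tr R ∧ R p q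

/-- R is a bisimulation: R and its inverse are simulations. -/
def IsBisim (tm : S → Prop) (tr : S → A → S → Prop) (R : S → S → Prop) : Prop :=
  IsSim tm tr R ∧ IsSim tm tr (fun p q => R q p)

/-- Strong bisimilarity. -/
def Bisimilar (tm : S → Prop) (tr : S → A → S → Prop) (p q : S) : Prop :=
  ∃ R, IsBisim tm tr R ∧ R p q

/-- A strong bisimulation: a symmetric relation matching termination and transitions. -/
def IsStrongBisim (tm : S → Prop) (tr : S → A → S → Prop) (R : S → S → Prop) : Prop :=
  Symmetric R ∧ ∀ p q, R p q →
    (tm p ↔ tm q) ∧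
    (∀ a p', tr p a p' → ∃ q', tr q a q' ∧ R p' q')

/-- P is a partition of S: nonempty, covering, pairwise-disjoint classes. -/
def IsPartition' (P : Set (Set S)) : Prop :=
  (∀ Q ∈ P, Q.Nonempty) ∧ (∀ s : S, ∃ Q ∈ P, s ∈ Q) ∧
  (∀ Q ∈ P, ∀ R ∈ P, (Q ∩ R).Nonempty → Q = R)

/-- Partition-relation pair: a partition with a partial order on its classes. -/
def IsPRP (P : Set (Set S)) (le : Set S → Set S → Prop) : Prop :=
  IsPartition' P ∧
  (∀ Q R, le Q R → Q ∈ P ∧ R ∈ P) ∧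
  (∀ Q ∈ P, le Q Q) ∧
  (∀ Q R, le Q R → le R Q → Q = R) ∧
  (∀ Q R T, le Q R → le R T → le Q T)

/-- Every state of P has an a-transition into X. -/
def AllTr (tr : S → A → S → Prop) (a : A) (P X : Set S) : Prop :=
  ∀ p ∈ P, ∃ x ∈ X, tr p a x

/-- Some state of P has an a-transition into X. -/
def ExTr (tr : S → A → S → Prop) (a : A) (P X : Set S) : Prop :=
  ∃ p ∈ P, ∃ x ∈ X, tr p a x

/-- bb(R): union of all big brother classes of R. -/
def bigBro (P : Set (Set S)) (le : Set S → Set S → Prop) (R : Set S) : Set S :=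
  {x | ∃ Q ∈ P, le R Q ∧ x ∈ Q}

/-- lb(R): union of all little brother classes of R. -/
def litBro (P : Set (Set S)) (le : Set S → Set S → Prop) (R : Set S) : Set S :=
  {x | ∃ Q ∈ P, le Q R ∧ x ∈ Q}

/-- Stability of a partition-relation pair (Definition of stability conditions a-d). -/
def IsStable (tm : S → Prop) (tr : S → A → S → Prop) (B : Set A)
    (P : Set (Set S)) (le : Set S → Set S → Prop) : Prop :=
  (∀ Q ∈ P, (∀ q ∈ Q, tm q) ∨ (∀ q ∈ Q, ¬ tm q)) ∧
  (∀ Q R, le Q R → (∀ q ∈ Q, tm q) → (∀ r ∈ R, tm r)) ∧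
  (∀ Q Q' R, R ∈ P → le Q Q' → ∀ a, ExTr tr a Q R → AllTr tr a Q' (bigBro P le R)) ∧
  (∀ Q Q' R, R ∈ P → le Q Q' → ∀ b ∈ B, ExTr tr b Q' R → AllTr tr b Q (litBro P le R))

/-- The order ◁ on partition-relation pairs. -/
def Lhd (P₁ : Set (Set S)) (le₁ : Set S → Set S → Prop)
    (P₂ : Set (Set S)) (le₂ : Set S → Set S → Prop) : Prop :=
  ∀ Q R, le₁ Q R → ∃ Q' ∈ P₂, ∃ R' ∈ P₂, Q ⊆ Q' ∧ R ⊆ R' ∧ le₂ Q' R'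

/-- The relation on states induced by a partition-relation pair. -/
def IndRel (P : Set (Set S)) (le : Set S → Set S → Prop) (p q : S) : Prop :=
  ∃ Q ∈ P, ∃ R ∈ P, le Q R ∧ p ∈ Q ∧ q ∈ R

/-- Equivalence classes of the equivalence kernel R ∩ R⁻¹ of a preorder R. -/
def eqClasses (R : S → S → Prop) : Set (Set S) :=
  {C | ∃ p, C = {q | R p q ∧ R q p}}

/-- The class order induced by a preorder R on its equivalence classes. -/
def classLe (R : S → S → Prop) (Q T : Set S) : Prop :=
  Q ∈ eqClasses R ∧ T ∈ eqClasses R ∧ ∃ p ∈ Q, ∃ q ∈ T, R p q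

/-- The little brother relation ≤' induced on a parent partition P'. -/
def IndLe (le : Set S → Set S → Prop) (P' : Set (Set S)) (Q' R' : Set S) : Prop :=
  Q' ∈ P' ∧ R' ∈ P' ∧ ∃ Q R, le Q R ∧ Q ⊆ Q' ∧ R ⊆ R'

/-- bb'(R') with respect to a parent partition. -/
def bigBro' (le : Set S → Set S → Prop) (P' : Set (Set S)) (R' : Set S) : Set S :=
  {x | ∃ Q' ∈ P', IndLe le P' R' Q' ∧ x ∈ Q'}

/-- lb'(R') with respect to a parent partition. -/
def litBro' (le : Set S → Set S → Prop) (P' : Set (Set S)) (R' : Set S) : Set S :=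
  {x | ∃ Q' ∈ P', IndLe le P' Q' R' ∧ x ∈ Q'}

/-- Stability conditions 1-4 of (P, le) with respect to a parent partition P'. -/
def StableWrt (tm : S → Prop) (tr : S → A → S → Prop) (B : Set A)
    (P : Set (Set S)) (le : Set S → Set S → Prop) (P' : Set (Set S)) : Prop :=
  (∀ Q ∈ P, ∀ a, ∀ R' ∈ P', ExTr tr a Q R' → AllTr tr a Q (bigBro' le P' R')) ∧
  (∀ Q ∈ P, ∀ b ∈ B, ∀ R' ∈ P', ExTr tr b Q R' → AllTr tr b Q (litBro' le P' R')) ∧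
  (∀ Q T, le Q T → ∀ a, ∀ R' ∈ P', AllTr tr a Q R' → AllTr tr a T (bigBro' le P' R')) ∧
  (∀ Q T, le Q T → ∀ b ∈ B, ∀ R' ∈ P', AllTr tr b T R' → AllTr tr b Q (litBro' le P' R'))

/-- P' is a parent partition of P. -/
def IsParent (P P' : Set (Set S)) : Prop :=
  IsPartition' P' ∧ ∀ Q ∈ P, ∃ Q' ∈ P', Q ⊆ Q'

/-- The partition obtained by splitting the class P₀ of P' into S' and P₀ \ S'. -/
def splitPart (P' : Set (Set S)) (P₀ Sp : Set S) : Set (Set S) :=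
  (P' \ {P₀}) ∪ {Sp, P₀ \ Sp}

/-- Some le-related pair of classes lies inside (X, Y). -/
def relBetween (le : Set S → Set S → Prop) (X Y : Set S) : Prop :=
  ∃ Q R, le Q R ∧ Q ⊆ X ∧ R ⊆ Y

/-- Sp is a splitter of the class P₀ of the parent partition P' with respect to P. -/
def IsSplitter (P : Set (Set S)) (le : Set S → Set S → Prop)
    (P' : Set (Set S)) (P₀ Sp : Set S) : Prop :=
  P₀ ∈ P' ∧ Sp ⊆ P₀ ∧ Sp.Nonempty ∧ (P₀ \ Sp).Nonempty ∧
  (∀ Q ∈ P, Q ⊆ Sp ∨ Q ∩ Sp = ∅) ∧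
  (relBetween le Sp (P₀ \ Sp) ∨
    (¬ relBetween le Sp (P₀ \ Sp) ∧ ¬ relBetween le (P₀ \ Sp) Sp))

/-- (Pr, ler) is the result Refine(P, le, P', Sp): the ◁-coarsest pair ◁-below (P, le)
stable with respect to the split parent partition. -/
def IsRefineOf (tm : S → Prop) (tr : S → A → S → Prop) (B : Set A)
    (P : Set (Set S)) (le : Set S → Set S → Prop)
    (P' : Set (Set S)) (P₀ Sp : Set S)
    (Pr : Set (Set S)) (ler : Set S → Set S → Prop) : Prop :=
  IsPRP Pr ler ∧ Lhd Pr ler P le ∧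
  StableWrt tm tr B Pr ler (splitPart P' P₀ Sp) ∧
  ∀ Q lq, IsPRP Q lq → Lhd Q lq P le →
    StableWrt tm tr B Q lq (splitPart P' P₀ Sp) → Lhd Q lq Pr ler

/-! Partial bisimilarity `≤_B` is a preorder and is itself a partial bisimulation, so its
kernel classes, ordered by `≤_B`, satisfy the stability conditions (a)–(d) directly.
Conversely, for a stable pair `(P', ≤')` the induced relation "the class of `p` lies `≤'`-below
the class of `q`" is a partial bisimulation: conditions (a)–(d) are exactly its transfer
properties. It is therefore contained in `≤_B`, and since `≤'` is reflexive every class of `P'`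
lies inside a single `≃_B`-class, with `≤'`-related classes landing in `≤_B`-related ones. -/

def eqClassOf (R : S → S → Prop) (p : S) : Set S :=
  {q | R p q ∧ R q p}

lemma eqClassOf_mem_eqClasses (R : S → S → Prop) (p : S) : eqClassOf R p ∈ eqClasses R :=
  ⟨p, rfl⟩

section PreorderClasses

variable {R : S → S → Prop}

lemma mem_eqClassOf_self [Std.Refl R] (p : S) : p ∈ eqClassOf R p :=
  ⟨refl_of R p, refl_of R p⟩

lemma eq_eqClassOf_of_mem [IsTrans S R] {C : Set S} (hC : C ∈ eqClasses R) {p : S}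
    (hp : p ∈ C) : C = eqClassOf R p := by
  obtain ⟨r, rfl⟩ := hC
  ext q
  exact ⟨fun hq => AntisymmRel.trans (AntisymmRel.symm hp) hq, AntisymmRel.trans hp⟩

lemma rel_of_mem_eqClasses [IsTrans S R] {C : Set S} (hC : C ∈ eqClasses R) {p q : S}
    (hp : p ∈ C) (hq : q ∈ C) : R p q := by
  rw [eq_eqClassOf_of_mem hC hp] at hq
  exact hq.1

lemma rel_of_classLe [IsTrans S R] {Q T : Set S} (h : classLe R Q T) {p q : S} (hp : p ∈ Q)
    (hq : q ∈ T) : R p q := by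
  obtain ⟨hQ, hT, p₀, hp₀, q₀, hq₀, h₀⟩ := h
  exact trans_of R (rel_of_mem_eqClasses hQ hp hp₀)
    (trans_of R h₀ (rel_of_mem_eqClasses hT hq₀ hq))

lemma classLe_eqClassOf [Std.Refl R] {p q : S} (h : R p q) :
    classLe R (eqClassOf R p) (eqClassOf R q) :=
  ⟨eqClassOf_mem_eqClasses R p, eqClassOf_mem_eqClasses R q,
    p, mem_eqClassOf_self p, q, mem_eqClassOf_self q, h⟩

theorem isPRP_eqClasses_classLe [IsPreorder S R] : IsPRP (eqClasses R) (classLe R) := by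
  refine ⟨⟨?_, ?_, ?_⟩, fun Q T h => ⟨h.1, h.2.1⟩, ?_, ?_, ?_⟩
  · rintro _ ⟨p, rfl⟩
    exact ⟨p, mem_eqClassOf_self p⟩
  · exact fun s => ⟨_, eqClassOf_mem_eqClasses R s, mem_eqClassOf_self s⟩
  · rintro Q hQ T hT ⟨x, hxQ, hxT⟩
    rw [eq_eqClassOf_of_mem hQ hxQ, eq_eqClassOf_of_mem hT hxT]
  · rintro _ ⟨p, rfl⟩
    exact classLe_eqClassOf (refl_of R p)
  · intro Q T hQT hTQ
    obtain ⟨hQ, hT, p, hp, q, hq, hpq⟩ := hQT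
    rw [eq_eqClassOf_of_mem hQ hp, eq_eqClassOf_of_mem hT hq]
    exact eq_eqClassOf_of_mem (eqClassOf_mem_eqClasses R p) ⟨hpq, rel_of_classLe hTQ hq hp⟩
  · intro Q T U hQT hTU
    obtain ⟨p, hp, t, ht, -⟩ := hQT.2.2
    obtain ⟨-, -, u, hu, -⟩ := hTU.2.2
    exact ⟨hQT.1, hTU.2.1, p, hp, u, hu, trans_of R (rel_of_classLe hQT hp ht) (rel_of_classLe hTU ht hu)⟩

lemma mem_bigBro_of_rel [Std.Refl R] {C : Set S} (hC : C ∈ eqClasses R) {x y : S} (hx : x ∈ C)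
    (hxy : R x y) : y ∈ bigBro (eqClasses R) (classLe R) C :=
  ⟨eqClassOf R y, eqClassOf_mem_eqClasses R y,
    ⟨hC, eqClassOf_mem_eqClasses R y, x, hx, y, mem_eqClassOf_self y, hxy⟩, mem_eqClassOf_self y⟩

lemma mem_litBro_of_rel [Std.Refl R] {C : Set S} (hC : C ∈ eqClasses R) {x y : S} (hx : x ∈ C)
    (hyx : R y x) : y ∈ litBro (eqClasses R) (classLe R) C :=
  ⟨eqClassOf R y, eqClassOf_mem_eqClasses R y,
    ⟨eqClassOf_mem_eqClasses R y, hC, y, mem_eqClassOf_self y, x, hx, hyx⟩, mem_eqClassOf_self y⟩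

theorem lhd_eqClasses_of_indRel_le [Std.Refl R] {P : Set (Set S)} {le : Set S → Set S → Prop}
    (hP : IsPRP P le) (hind : ∀ p q, IndRel P le p q → R p q) :
    Lhd P le (eqClasses R) (classLe R) := by
  obtain ⟨⟨hne, -, -⟩, hdom, hrefl, -, -⟩ := hP
  have subset_eqClassOf : ∀ Q ∈ P, ∀ p ∈ Q, Q ⊆ eqClassOf R p := fun Q hQ p hp x hx =>
    ⟨hind p x ⟨Q, hQ, Q, hQ, hrefl Q hQ, hp, hx⟩, hind x p ⟨Q, hQ, Q, hQ, hrefl Q hQ, hx, hp⟩⟩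
  intro Q T hQT
  obtain ⟨hQ, hT⟩ := hdom Q T hQT
  obtain ⟨p, hp⟩ := hne Q hQ
  obtain ⟨q, hq⟩ := hne T hT
  exact ⟨_, eqClassOf_mem_eqClasses R p, _, eqClassOf_mem_eqClasses R q,
    subset_eqClassOf Q hQ p hp, subset_eqClassOf T hT q hq,
    classLe_eqClassOf (hind p q ⟨Q, hQ, T, hT, hQT, hp, hq⟩)⟩

end PreorderClasses

section PartialBisimilarity

variable {tm : S → Prop} {tr : S → A → S → Prop} {B : Set A}

lemma isPB_eq : IsPB tm tr B Eq := by
  rintro p _ rfl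
  exact ⟨id, fun a p' h => ⟨p', h, rfl⟩, fun b q' _ h => ⟨q', h, rfl⟩⟩

lemma IsPB.comp {R₁ R₂ : S → S → Prop} (h₁ : IsPB tm tr B R₁) (h₂ : IsPB tm tr B R₂) :
    IsPB tm tr B (Relation.Comp R₁ R₂) := by
  rintro p r ⟨q, hpq, hqr⟩
  obtain ⟨tm₁, fwd₁, bwd₁⟩ := h₁ p q hpq
  obtain ⟨tm₂, fwd₂, bwd₂⟩ := h₂ q r hqr
  refine ⟨tm₂ ∘ tm₁, fun a p' hp' => ?_, fun b r' hb hr' => ?_⟩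
  · obtain ⟨q', hq', hpq'⟩ := fwd₁ a p' hp'
    obtain ⟨r', hr', hqr'⟩ := fwd₂ a q' hq'
    exact ⟨r', hr', q', hpq', hqr'⟩
  · obtain ⟨q', hq', hqr'⟩ := bwd₂ b r' hb hr'
    obtain ⟨p', hp', hpq'⟩ := bwd₁ b q' hb hq'
    exact ⟨p', hp', q', hpq', hqr'⟩

lemma IsPB.le_pbLe {R : S → S → Prop} (hR : IsPB tm tr B R) {p q : S} (h : R p q) :
    PbLe tm tr B p q :=
  ⟨R, hR, h⟩

lemma isPB_pbLe : IsPB tm tr B (PbLe tm tr B) := by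
  rintro p q ⟨R, hR, hpq⟩
  obtain ⟨htm, fwd, bwd⟩ := hR p q hpq
  refine ⟨htm, fun a p' hp' => ?_, fun b q' hb hq' => ?_⟩
  · obtain ⟨q', hq', h⟩ := fwd a p' hp'
    exact ⟨q', hq', hR.le_pbLe h⟩
  · obtain ⟨p', hp', h⟩ := bwd b q' hb hq'
    exact ⟨p', hp', hR.le_pbLe h⟩

instance isPreorder_pbLe : IsPreorder S (PbLe tm tr B) where
  refl _ := isPB_eq.le_pbLe rfl
  trans _ q _ := fun ⟨_, h₁, hpq⟩ ⟨_, h₂, hqr⟩ => (h₁.comp h₂).le_pbLe ⟨q, hpq, hqr⟩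

theorem isStable_pbLe :
    IsStable tm tr B (eqClasses (PbLe tm tr B)) (classLe (PbLe tm tr B)) := by
  refine ⟨fun Q hQ => ?_, fun Q T hQT htm t ht => ?_, ?_, ?_⟩
  · by_cases h : ∃ q₀ ∈ Q, tm q₀
    · obtain ⟨q₀, hq₀, htm⟩ := h
      exact .inl fun q hq => (isPB_pbLe q₀ q (rel_of_mem_eqClasses hQ hq₀ hq)).1 htm
    · exact .inr fun q hq htm => h ⟨q, hq, htm⟩
  · obtain ⟨p, hp, -⟩ := hQT.2.2
    exact (isPB_pbLe p t (rel_of_classLe hQT hp ht)).1 (htm p hp)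
  · rintro Q Q' C hC hQQ' a ⟨p, hp, x, hx, hpx⟩ q hq
    obtain ⟨y, hqy, hxy⟩ := (isPB_pbLe p q (rel_of_classLe hQQ' hp hq)).2.1 a x hpx
    exact ⟨y, mem_bigBro_of_rel hC hx hxy, hqy⟩
  · rintro Q Q' C hC hQQ' b hb ⟨q, hq, x, hx, hqx⟩ p hp
    obtain ⟨y, hpy, hyx⟩ := (isPB_pbLe p q (rel_of_classLe hQQ' hp hq)).2.2 b x hb hqx
    exact ⟨y, mem_litBro_of_rel hC hx hyx, hpy⟩

theorem IsStable.isPB_indRel {P : Set (Set S)} {le : Set S → Set S → Prop}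
    (hst : IsStable tm tr B P le) (hcov : ∀ s, ∃ Q ∈ P, s ∈ Q) :
    IsPB tm tr B (IndRel P le) := by
  obtain ⟨hterm, hterm_le, hfwd, hbwd⟩ := hst
  rintro p q ⟨Q, hQ, T, hT, hQT, hp, hq⟩
  refine ⟨fun htm => ?_, fun a p' hp' => ?_, fun b q' hb hq' => ?_⟩
  · exact hterm_le Q T hQT ((hterm Q hQ).resolve_right fun h => h p hp htm) q hq
  · obtain ⟨C, hC, hpC⟩ := hcov p'
    obtain ⟨q', ⟨D, hD, hCD, hq'D⟩, hqq'⟩ := hfwd Q T C hC hQT a ⟨p, hp, p', hpC, hp'⟩ q hq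
    exact ⟨q', hqq', C, hC, D, hD, hCD, hpC, hq'D⟩
  · obtain ⟨C, hC, hqC⟩ := hcov q'
    obtain ⟨p', ⟨D, hD, hDC, hp'D⟩, hpp'⟩ := hbwd Q T C hC hQT b hb ⟨q, hq, q', hqC, hq'⟩ p hp
    exact ⟨p', hpp', D, hD, C, hC, hDC, hp'D, hqC⟩

end PartialBisimilarity

/-- the pair induced by partial bisimilarity is the ◁-maximal stable
partition-relation pair. -/
theorem lhd_maximal (tm : S → Prop) (tr : S → A → S → Prop) (B : Set A) :
    IsPRP (eqClasses (PbLe tm tr B)) (classLe (PbLe tm tr B)) ∧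
    IsStable tm tr B (eqClasses (PbLe tm tr B)) (classLe (PbLe tm tr B)) ∧
    (∀ (P' : Set (Set S)) (le' : Set S → Set S → Prop),
      IsPRP P' le' → IsStable tm tr B P' le' →
      Lhd P' le' (eqClasses (PbLe tm tr B)) (classLe (PbLe tm tr B))) :=
  ⟨isPRP_eqClasses_classLe, isStable_pbLe, fun _ _ hP hst =>
    lhd_eqClasses_of_indRel_le hP fun _ _ => (hst.isPB_indRel hP.1.2.1).le_pbLe⟩
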